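/- arXiv:2407.03932 — 4 statements merged into one kernel-verified Lean document; each statement's English description precedes it below -/
import Mathlib

section
/- Let G be a group containing a subgroup N of index 2 such that N is free abelian of finite rank n. Then every torsion element of the abelianization G^{ab} = G/[G,G] has order dividing 2; consequently G^{ab} is isomorphic to ℤ^l × (ℤ/2ℤ)^k for some integers k, l ≥ 0, and moreover k + l ≤ n + 1. -/
/-!
Composing the transfer `G → N ≅ ℤⁿ` with the inclusion `N → Gᵃᵇ` gives `x ↦ x ^ [G : N]` on
`Gᵃᵇ`; since `ℤⁿ` is torsion-free, every torsion element of `Gᵃᵇ` is killed by `2`. The group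
`Gᵃᵇ` is generated by `N` and one element outside `N`, hence by `n + 1` elements, so it splits as
`ℤˡ × (ℤ/2)ᵏ`, and reducing mod `2` yields an `𝔽₂`-space of dimension `l + k` spanned by `n + 1`
vectors.
-/

open MulAction in
theorem MonoidHom.transfer_comp_subtype_eq_pow {G A : Type*} [Group G] [CommGroup A]
    (H : Subgroup G) [H.FiniteIndex] (f : G →* A) (g : G) :
    (f.comp H.subtype).transfer g = f g ^ H.index := by
  classical
  let := H.fintypeQuotientOfFiniteIndex
  rw [transfer_eq_prod_quotient_orbitRel_zpowers_quot, H.index_eq_sum_minimalPeriod g,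
    ← Finset.prod_pow_eq_pow_sum]
  refine Finset.prod_congr rfl fun q _ => ?_
  simp only [comp_apply, Subgroup.coe_subtype, map_mul, map_inv, map_pow]
  rw [mul_comm, mul_inv_cancel_left]

theorem MonoidHom.transfer_comp {G A B : Type*} [Group G] [CommGroup A] [CommGroup B]
    {H : Subgroup G} [H.FiniteIndex] (ϕ : H →* A) (f : A →* B) :
    (f.comp ϕ).transfer = f.comp ϕ.transfer := by
  ext g
  simp only [transfer, Subgroup.leftTransversals.diff, coe_mk, OneHom.coe_mk, comp_apply, map_prod]

theorem Abelianization.pow_index_eq_one_of_isOfFinOrder {G A : Type*} [Group G] [CommGroup A]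
    [IsMulTorsionFree A] {H : Subgroup G} [H.FiniteIndex] (e : H ≃* A)
    {x : Abelianization G} (hx : IsOfFinOrder x) : x ^ H.index = 1 := by
  obtain ⟨g, rfl⟩ : ∃ g, of g = x := QuotientGroup.mk'_surjective _ x
  have htransfer : e.toMonoidHom.transfer g = 1 :=
    ((Abelianization.lift e.toMonoidHom.transfer).isOfFinOrder hx).eq_one'
  let θ : A →* Abelianization G := (of.comp H.subtype).comp e.symm.toMonoidHom
  have hθ : θ.comp e.toMonoidHom = of.comp H.subtype := by ext; simp [θ]
  rw [← MonoidHom.transfer_comp_subtype_eq_pow H of, ← hθ, MonoidHom.transfer_comp,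
    MonoidHom.comp_apply, htransfer, map_one]

theorem Subgroup.exists_zpow_mul_mem_of_index_eq_two {G : Type*} [Group G] {H : Subgroup G}
    (hH : H.index = 2) {u : G} (hu : u ∉ H) (g : G) : ∃ a : ℤ, u ^ (-a) * g ∈ H := by
  by_cases hg : g ∈ H
  · exact ⟨0, by simpa using hg⟩
  · exact ⟨1, (mul_mem_iff_of_index_two hH).2 (by simp [hu, hg])⟩

theorem Abelianization.exists_surjective_int_prod_of_index_eq_two {G : Type*} [Group G]
    {H : Subgroup G} (hH : H.index = 2) {n : ℕ} (e : H ≃* Multiplicative (Fin n → ℤ)) :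
    ∃ f : ℤ × (Fin n → ℤ) →+ Additive (Abelianization G), Function.Surjective f := by
  obtain ⟨u, hu⟩ : ∃ u, u ∉ H := SetLike.exists_not_mem_of_ne_top H (fun h => by simp [h] at hH)
  refine ⟨(zmultiplesHom _ (.ofMul (of u))).coprod
    (MonoidHom.toAdditiveRight ((of.comp H.subtype).comp e.symm.toMonoidHom)), fun x => ?_⟩
  obtain ⟨g, hg⟩ : ∃ g, of g = x.toMul := QuotientGroup.mk'_surjective _ _
  obtain ⟨a, ha⟩ := Subgroup.exists_zpow_mul_mem_of_index_eq_two hH hu g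
  refine ⟨(a, (e ⟨_, ha⟩).toAdd), Additive.toMul.injective ?_⟩
  simp [← hg]

theorem Submodule.nonempty_linearEquiv_torsion_prod_quotient {R M : Type*} [CommRing R]
    [IsDomain R] [IsPrincipalIdealRing R] [AddCommGroup M] [Module R M] [Module.Finite R M] :
    Nonempty (M ≃ₗ[R] torsion R M × (M ⧸ torsion R M)) := by
  obtain ⟨s, hs⟩ := Module.projective_lifting_property (torsion R M).mkQ LinearMap.id
    (torsion R M).mkQ_surjective
  exact ⟨((LinearMap.exact_subtype_mkQ _).splitSurjectiveEquiv
    (torsion R M).injective_subtype ⟨s, hs⟩).1⟩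

open Module in
theorem AddCommGroup.exists_addEquiv_int_pi_prod_zmod_two_pi {M : Type*} [AddCommGroup M]
    [Module.Finite ℤ M] (h : ∀ x : M, IsOfFinAddOrder x → 2 • x = 0) :
    ∃ l k : ℕ, Nonempty (M ≃+ (Fin l → ℤ) × (Fin k → ZMod 2)) := by
  let T := Submodule.torsion ℤ M
  obtain ⟨e⟩ := Submodule.nonempty_linearEquiv_torsion_prod_quotient (R := ℤ) (M := M)
  have hT : ∀ x : T, 2 • x = 0 := fun x => Subtype.ext <| h x <| by
    have hx : (x : M) ∈ (Submodule.torsion ℤ M).toAddSubgroup := x.2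
    rwa [Submodule.torsion_int] at hx
  let _ := AddCommGroup.zmodModule hT
  have : Module.Finite (ZMod 2) T := Module.Finite.of_restrictScalars_finite ℤ _ _
  exact ⟨finrank ℤ (M ⧸ T), finrank (ZMod 2) T, ⟨e.toAddEquiv.trans <|
    ((finBasis (ZMod 2) T).equivFun.toAddEquiv.prodCongr
      (finBasis ℤ (M ⧸ T)).equivFun.toAddEquiv).trans AddEquiv.prodComm⟩⟩

open Module in
theorem add_le_finrank_of_surjective {P : Type*} [AddCommGroup P] [Free ℤ P] [Module.Finite ℤ P]
    {l k : ℕ} (f : P →+ (Fin l → ℤ) × (Fin k → ZMod 2)) (hf : Function.Surjective f) :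
    l + k ≤ finrank ℤ P := by
  let reduce : (Fin l → ℤ) × (Fin k → ZMod 2) →+ (Fin l → ZMod 2) × (Fin k → ZMod 2) :=
    ((Int.castAddHom (ZMod 2)).compLeft (Fin l)).prodMap (AddMonoidHom.id _)
  have hreduce : Function.Surjective reduce :=
    Function.Surjective.prodMap ZMod.intCast_surjective.comp_left Function.surjective_id
  let σ := (reduce.comp f).toIntLinearMap
  have hσ : Function.Surjective σ := hreduce.comp hf
  let b := finBasis ℤ P
  have hspan_int : Submodule.span ℤ (Set.range (σ ∘ b)) = ⊤ := by
    rw [Set.range_comp, Submodule.span_image, b.span_eq, Submodule.map_top,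
      LinearMap.range_eq_top.mpr hσ]
  have hspan : Submodule.span (ZMod 2) (Set.range (σ ∘ b)) = ⊤ :=
    eq_top_iff.mpr fun x _ =>
      Submodule.span_le_restrictScalars ℤ (ZMod 2) _ (hspan_int ▸ Submodule.mem_top)
  simpa using finrank_le_of_span_eq_top hspan

/-- Let `G` be a group containing a subgroup `N` of index `2` such that `N`
is free abelian of finite rank `n`.  Then every torsion element of the abelianization
`Gᵃᵇ = G/[G,G]` has order dividing `2`; consequently `Gᵃᵇ ≅ ℤˡ × (ℤ/2ℤ)ᵏ` for some
`k, l ≥ 0`, and moreover `k + l ≤ n + 1`. -/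
theorem abelianization_of_index_two_free_abelian
    (G : Type*) [Group G] (N : Subgroup G) (n : ℕ)
    (hidx : N.index = 2)
    (hfree : Nonempty (N ≃* Multiplicative (Fin n → ℤ))) :
    (∀ x : Abelianization G, IsOfFinOrder x → x ^ 2 = 1) ∧
    ∃ k l : ℕ, k + l ≤ n + 1 ∧
      Nonempty (Abelianization G ≃*
        Multiplicative ((Fin l → ℤ) × (Fin k → ZMod 2))) := by
  obtain ⟨e⟩ := hfree
  have : N.FiniteIndex := ⟨by omega⟩
  have htorsion : ∀ x : Abelianization G, IsOfFinOrder x → x ^ 2 = 1 := fun x hx =>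
    hidx ▸ Abelianization.pow_index_eq_one_of_isOfFinOrder e hx
  refine ⟨htorsion, ?_⟩
  obtain ⟨f, hf⟩ := Abelianization.exists_surjective_int_prod_of_index_eq_two hidx e
  have : Module.Finite ℤ (Additive (Abelianization G)) :=
    Module.Finite.of_surjective f.toIntLinearMap hf
  obtain ⟨l, k, ⟨E⟩⟩ := AddCommGroup.exists_addEquiv_int_pi_prod_zmod_two_pi
    fun (x : Additive (Abelianization G)) hx => htorsion x.toMul hx
  have hbound := add_le_finrank_of_surjective (E.toAddMonoidHom.comp f) (E.surjective.comp hf)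
  exact ⟨k, l, by simpa [add_comm] using hbound, ⟨AddEquiv.toMultiplicativeRight E⟩⟩
end

section
/- Let G be a group containing a subgroup N of index 2 such that N is free abelian of finite rank n, and write G^{ab} ≅ ℤ^l × (ℤ/2ℤ)^k. Then l equals the rank of the subgroup {x ∈ N : g x g⁻¹ = x} of elements of N fixed by conjugation by g, where g is any element of G \ N (this fixed subgroup does not depend on the choice of g, since N is abelian). -/
/-!
Both sides are dimensions of spaces of homomorphisms to `ℚ`. Since `Gᵃᵇ ≅ ℤˡ × (ℤ/2)ᵏ`, the space
`Hom(G, ℚ) = Hom(Gᵃᵇ, ℚ)` has dimension `l`. Restriction to `N` is injective on it, because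
`x² ∈ N` for every `x` and `ℚ` is torsion-free, and its image consists of the `g`-invariant
homomorphisms `ψ : N → ℚ`: such a `ψ` is invariant under all of `G`, which makes `x ↦ ψ(x²) / 2` a
homomorphism `G → ℚ` extending it. Read on `ℤⁿ`, the invariant homomorphisms are those vanishing on
the image of `A - 1`, a space of dimension `rank (ℤⁿ / im (A - 1)) = rank ker (A - 1)`.
-/

open Module Multiplicative

section BaseChange

variable {R K M M' : Type*} [CommRing R] [Field K] [Algebra R K] [FaithfulSMul R K]
  [AddCommGroup M] [Module R M] [AddCommGroup M'] [Module R M']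

theorem finrank_linearMap_eq_finrank [Module.Finite R M] :
    finrank K (M →ₗ[R] K) = finrank R M := by
  rw [(LinearMap.liftBaseChangeEquiv K).finrank_eq, Subspace.dual_finrank_eq,
    (TensorProduct.isBaseChange R M K).finrank_eq]

theorem finrank_ker_lcomp_eq_finrank_quotient_range [Module.Finite R M'] (f : M →ₗ[R] M') :
    finrank K (LinearMap.ker (LinearMap.lcomp K K f)) = finrank R (M' ⧸ LinearMap.range f) := by
  have hinj := LinearMap.lcomp_injective_of_surjective (S := K) (N := K) _
    (LinearMap.range f).mkQ_surjective
  have hrange : LinearMap.range (LinearMap.lcomp K K (LinearMap.range f).mkQ) =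
      LinearMap.ker (LinearMap.lcomp K K f) := by
    ext u
    constructor
    · rintro ⟨h, rfl⟩
      ext x
      simp [(Submodule.Quotient.mk_eq_zero _).2 (LinearMap.mem_range_self f x)]
    · intro hu
      have hle : LinearMap.range f ≤ LinearMap.ker u := by
        rintro _ ⟨x, rfl⟩
        exact LinearMap.congr_fun hu x
      exact ⟨(LinearMap.range f).liftQ u hle, by ext; simp⟩
  rw [← hrange, LinearMap.finrank_range_of_inj hinj, finrank_linearMap_eq_finrank]

end BaseChange

section Domain

variable {R M M' : Type*} [CommRing R] [IsDomain R] [AddCommGroup M] [Module R M]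
  [AddCommGroup M'] [Module R M']

theorem finrank_quotient_range_eq_finrank_ker [Module.Finite R M] (f : M →ₗ[R] M) :
    finrank R (M ⧸ LinearMap.range f) = finrank R (LinearMap.ker f) := by
  have h₁ := (LinearMap.range f).finrank_quotient_add_finrank
  have h₂ := (LinearMap.ker f).finrank_quotient_add_finrank
  rw [f.quotKerEquivRange.finrank_eq] at h₂
  omega

theorem finrank_prod_of_isDomain [Module.Finite R M] [Module.Finite R M'] :
    finrank R (M × M') = finrank R M + finrank R M' := by
  have h := (LinearMap.ker (LinearMap.fst R M M')).finrank_quotient_add_finrank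
  rw [(LinearMap.quotKerEquivOfSurjective _ LinearMap.fst_surjective).finrank_eq,
    LinearMap.ker_fst, LinearMap.finrank_range_of_inj LinearMap.inr_injective] at h
  exact h.symm

end Domain

theorem finrank_int_pi_zmod_eq_zero {ι : Type*} [Finite ι] (m : ℕ) [NeZero m] :
    finrank ℤ (ι → ZMod m) = 0 :=
  finrank_eq_zero_iff.2 fun x => ⟨m, by exact_mod_cast NeZero.ne m, by ext; simp [zsmul_eq_mul]⟩

section IndexTwo

variable {G : Type*} [Group G] {N : Subgroup G}

theorem Abelianization.addMonoidHom_eq_zero_of_forall_mem {V : Type*} [AddCommGroup V]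
    [IsAddTorsionFree V] [N.Normal] [N.FiniteIndex] (φ : Additive (Abelianization G) →+ V)
    (h : ∀ x ∈ N, φ (.ofMul (of x)) = 0) : φ = 0 := by
  refine AddMonoidHom.ext fun a => ?_
  obtain ⟨x, hx⟩ := QuotientGroup.mk_surjective a.toMul
  rw [show a = .ofMul (of x) from hx.symm]
  refine (nsmul_eq_zero_iff_right (Subgroup.FiniteIndex.index_ne_zero (H := N))).1 ?_
  rw [← map_nsmul, ← ofMul_pow, ← map_pow, h _ (N.pow_index_mem x)]

variable [N.Normal] {A : Type*} [CommGroup A]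

theorem MonoidHom.map_conjNormal_eq_of_index_eq_two (hN : N.index = 2) {g : G} (hg : g ∉ N)
    (ψ : N →* A) (hψ : ∀ x, ψ (MulAut.conjNormal g x) = ψ x) (a : G) (x : N) :
    ψ (MulAut.conjNormal a x) = ψ x := by
  have conj_mem : ∀ m ∈ N, ∀ y : N, ψ (MulAut.conjNormal m y) = ψ y := fun m hm y => by
    have : MulAut.conjNormal m y = ⟨m, hm⟩ * y * ⟨m, hm⟩⁻¹ := Subtype.ext (by simp)
    rw [this, map_mul, map_mul, map_inv, mul_inv_cancel_comm]
  by_cases ha : a ∈ N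
  · exact conj_mem a ha x
  · have hag : a * g⁻¹ ∈ N := by
      rw [Subgroup.mul_mem_iff_of_index_two hN, inv_mem_iff]
      exact iff_of_false ha hg
    have : MulAut.conjNormal a x = MulAut.conjNormal (a * g⁻¹) (MulAut.conjNormal g x) :=
      Subtype.ext (by simp [mul_assoc])
    rw [this, conj_mem _ hag, hψ]

theorem MonoidHom.exists_apply_eq_sq_of_index_eq_two (hN : N.index = 2) (ψ : N →* A)
    (hψ : ∀ a : G, ∀ x : N, ψ (MulAut.conjNormal a x) = ψ x) :
    ∃ φ : G →* A, ∀ x : N, φ x = ψ x ^ 2 := by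
  let sq (x : G) : N := ⟨x ^ 2, Subgroup.sq_mem_of_index_two hN x⟩
  have map_sq (x : G) (hx : x ∈ N) : ψ (sq x) = ψ ⟨x, hx⟩ ^ 2 := map_pow ψ ⟨x, hx⟩ 2
  have mul_left (x y : G) (hx : x ∈ N) : ψ (sq (x * y)) = ψ (sq x) * ψ (sq y) := by
    have : sq (x * y) = ⟨x, hx⟩ * MulAut.conjNormal y ⟨x, hx⟩ * sq y :=
      Subtype.ext (by simp only [sq, pow_two, MulAut.conjNormal_apply, Subgroup.coe_mul]; group)
    rw [this, map_mul, map_mul, hψ, map_sq x hx, pow_two]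
  have mul_right (x y : G) (hy : y ∈ N) : ψ (sq (x * y)) = ψ (sq x) * ψ (sq y) := by
    have : sq (x * y) = MulAut.conjNormal x ⟨y, hy⟩ * sq x * ⟨y, hy⟩ :=
      Subtype.ext (by simp only [sq, pow_two, MulAut.conjNormal_apply, Subgroup.coe_mul]; group)
    rw [this, map_mul, map_mul, hψ, map_sq y hy, pow_two, mul_right_comm, mul_comm]
  have mul_of_mul_mem (x y : G) (hxy : x * y ∈ N) :
      ψ (sq (x * y)) = ψ (sq x) * ψ (sq y) := by
    have : sq x * sq y = MulAut.conjNormal x ⟨x * y, hxy⟩ * ⟨x * y, hxy⟩ :=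
      Subtype.ext (by simp only [sq, pow_two, MulAut.conjNormal_apply, Subgroup.coe_mul]; group)
    rw [← map_mul, this, map_mul, hψ, map_sq _ hxy, pow_two]
  refine ⟨{ toFun := fun x => ψ (sq x), map_one' := ?_, map_mul' := fun x y => ?_ },
    fun x => map_sq x x.2⟩
  · exact (congrArg ψ (Subtype.ext (one_pow 2))).trans ψ.map_one
  · by_cases hx : x ∈ N
    · exact mul_left x y hx
    by_cases hy : y ∈ N
    · exact mul_right x y hy
    · exact mul_of_mul_mem x y ((Subgroup.mul_mem_iff_of_index_two hN).2 (iff_of_false hx hy))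

theorem MonoidHom.exists_extension_of_index_eq_two {V : Type*} [AddCommGroup V] [Module ℚ V]
    (hN : N.index = 2) {g : G} (hg : g ∉ N) (ψ : N →* Multiplicative V)
    (hψ : ∀ x, ψ (MulAut.conjNormal g x) = ψ x) :
    ∃ φ : G →* Multiplicative V, ∀ x : N, φ x = ψ x := by
  obtain ⟨φ, hφ⟩ := ψ.exists_apply_eq_sq_of_index_eq_two hN
    (ψ.map_conjNormal_eq_of_index_eq_two hN hg hψ)
  let half := AddMonoidHom.toMultiplicative (DistribSMul.toAddMonoidHom V (2⁻¹ : ℚ))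
  refine ⟨half.comp φ, fun x => ?_⟩
  show ofAdd ((2⁻¹ : ℚ) • toAdd (φ x)) = ψ x
  rw [hφ, toAdd_pow, ← Nat.cast_smul_eq_nsmul ℚ, smul_smul]
  norm_num

end IndexTwo

section FixedSubgroup

variable {G : Type*} [Group G] {N : Subgroup G} {P : Type*} [AddCommGroup P]

def toAbelianization (e : N ≃* Multiplicative P) : P →ₗ[ℤ] Additive (Abelianization G) :=
  (MonoidHom.toAdditiveRight
    ((Abelianization.of.comp N.subtype).comp e.symm.toMonoidHom)).toIntLinearMap

@[simp]
theorem toAbelianization_apply (e : N ≃* Multiplicative P) (v : P) :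
    toAbelianization e v = .ofMul (Abelianization.of (e.symm (ofAdd v) : G)) := rfl

theorem lcomp_toAbelianization_injective [N.Normal] [N.FiniteIndex] (e : N ≃* Multiplicative P) :
    Function.Injective (LinearMap.lcomp ℚ ℚ (toAbelianization e)) := by
  refine (injective_iff_map_eq_zero _).2 fun φ hφ => LinearMap.toAddMonoidHom_injective ?_
  refine Abelianization.addMonoidHom_eq_zero_of_forall_mem (N := N) _ fun x hx => ?_
  simpa using LinearMap.congr_fun hφ (toAdd (e ⟨x, hx⟩))

variable {e : N ≃* Multiplicative P} {g : G} {A : P →+ P}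

theorem toAbelianization_comp_sub_id
    (hA : ∀ v, ((e.symm (ofAdd (A v)) : N) : G) = g * ((e.symm (ofAdd v) : N) : G) * g⁻¹) :
    toAbelianization e ∘ₗ (A.toIntLinearMap - LinearMap.id) = 0 := by
  ext v
  simp [hA]

theorem apply_conjNormal_eq_ofAdd [N.Normal]
    (hA : ∀ v, ((e.symm (ofAdd (A v)) : N) : G) = g * ((e.symm (ofAdd v) : N) : G) * g⁻¹)
    (x : N) : e (MulAut.conjNormal g x) = ofAdd (A (toAdd (e x))) := by
  rw [← e.apply_symm_apply (ofAdd (A _))]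
  congr 1
  ext
  simp [hA]

theorem range_lcomp_toAbelianization [N.Normal] (hN : N.index = 2) (hg : g ∉ N)
    (hA : ∀ v, ((e.symm (ofAdd (A v)) : N) : G) = g * ((e.symm (ofAdd v) : N) : G) * g⁻¹) :
    LinearMap.range (LinearMap.lcomp ℚ ℚ (toAbelianization e)) =
      LinearMap.ker (LinearMap.lcomp ℚ ℚ (A.toIntLinearMap - LinearMap.id)) := by
  apply le_antisymm
  · rintro _ ⟨φ, rfl⟩
    rw [LinearMap.mem_ker, LinearMap.lcomp_apply', LinearMap.lcomp_apply', LinearMap.comp_assoc,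
      toAbelianization_comp_sub_id hA, LinearMap.comp_zero]
  · intro u hu
    have hu (v : P) : u (A v) = u v := by
      simpa [sub_eq_zero] using LinearMap.congr_fun hu v
    let ψ := (AddMonoidHom.toMultiplicative u.toAddMonoidHom).comp e.toMonoidHom
    obtain ⟨φ, hφ⟩ := ψ.exists_extension_of_index_eq_two hN hg fun x => by
      simp [ψ, apply_conjNormal_eq_ofAdd hA, hu]
    refine ⟨(MonoidHom.toAdditiveLeft (Abelianization.lift φ)).toIntLinearMap, ?_⟩
    ext v
    simp [hφ, ψ]

end FixedSubgroup

/-- Let `G` be a group containing a subgroup `N` of index `2` with `N` free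
abelian of finite rank `n`, and write `Gᵃᵇ ≅ ℤˡ × (ℤ/2ℤ)ᵏ`.  Then `l` equals the rank of the
subgroup `{x ∈ N : g x g⁻¹ = x}` of elements of `N` fixed by conjugation by `g`, where `g` is
any element of `G \ N`.  Here `N` is identified with `ℤⁿ` via the isomorphism `e`, and the
conjugation action is encoded by the additive endomorphism `A` of `ℤⁿ` satisfying
`e.symm (A v) = g • e.symm v • g⁻¹` for all `v`; the fixed subgroup is then the kernel of
`A - id`, whose rank is its `ℤ`-rank as a free abelian group. -/
theorem rank_free_part_eq_rank_fixed_subgroup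
    (G : Type*) [Group G] (N : Subgroup G) (n k l : ℕ)
    (hidx : N.index = 2)
    (e : N ≃* Multiplicative (Fin n → ℤ))
    (g : G) (hg : g ∉ N)
    (A : (Fin n → ℤ) →+ (Fin n → ℤ))
    (hA : ∀ v : Fin n → ℤ,
      ((e.symm (Multiplicative.ofAdd (A v)) : N) : G) =
        g * ((e.symm (Multiplicative.ofAdd v) : N) : G) * g⁻¹)
    (iso : Abelianization G ≃* Multiplicative ((Fin l → ℤ) × (Fin k → ZMod 2))) :
    l = Module.finrank ℤ
      ↥(LinearMap.ker (A.toIntLinearMap -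
          (LinearMap.id : (Fin n → ℤ) →ₗ[ℤ] (Fin n → ℤ)))) := by
  have := Subgroup.normal_of_index_eq_two hidx
  have : N.FiniteIndex := ⟨by omega⟩
  let isoℤ : Additive (Abelianization G) ≃ₗ[ℤ] (Fin l → ℤ) × (Fin k → ZMod 2) :=
    iso.toAdditiveLeft.toIntLinearEquiv
  have : Module.Finite ℤ (Additive (Abelianization G)) := .equiv isoℤ.symm
  set f := A.toIntLinearMap - (LinearMap.id : (Fin n → ℤ) →ₗ[ℤ] (Fin n → ℤ))
  calc l = finrank ℤ (Additive (Abelianization G)) := by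
        rw [isoℤ.finrank_eq, finrank_prod_of_isDomain, finrank_fin_fun,
          finrank_int_pi_zmod_eq_zero, add_zero]
    _ = finrank ℚ (LinearMap.range (LinearMap.lcomp ℚ ℚ (toAbelianization e))) := by
        rw [LinearMap.finrank_range_of_inj (lcomp_toAbelianization_injective e),
          finrank_linearMap_eq_finrank]
    _ = finrank ℚ (LinearMap.ker (LinearMap.lcomp ℚ ℚ f)) := by
        rw [range_lcomp_toAbelianization hidx hg hA]
    _ = finrank ℤ ((Fin n → ℤ) ⧸ LinearMap.range f) :=
        finrank_ker_lcomp_eq_finrank_quotient_range f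
    _ = finrank ℤ (LinearMap.ker f) := finrank_quotient_range_eq_finrank_ker f
end

section
/- Let R be a commutative ring in which 2 is invertible, with finite index sets I and J. Let ψ be the R-algebra homomorphism from the polynomial ring R[X_i (i ∈ I), V_{j,k} ((j,k) ∈ J×J)] to the polynomial ring R[x_i (i ∈ I), y_j (j ∈ J)] determined by ψ(X_i) = x_i and ψ(V_{j,k}) = y_j·y_k. Then the kernel of ψ is the ideal generated by the elements V_{j,k} − V_{k,j} (j,k ∈ J) together with the elements V_{j,k}·V_{l,m} − V_{j,l}·V_{k,m} (j,k,l,m ∈ J). Consequently the quotient of R[X_i, V_{j,k}] by this ideal is isomorphic, via ψ, to the subalgebra of R[x_i, y_j] generated by the x_i and the products y_j·y_k. -/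
/-!
Modulo the symmetry and rank-one relations, a monomial in the `Xᵢ` and `V_{j,k}` depends only on
its image under `ψ`, i.e. on the multiset of `xᵢ` and `yⱼ` it produces. Indeed, if one side has a
factor `V_{a,b}`, the other side produces `y_a` and `y_b`, hence (after symmetry) has factors
`V_{a,c}` and `V_{b,d}`, and `V_{a,c} V_{b,d} ≡ V_{a,b} V_{c,d}`; so `V_{a,b}` splits off both
sides and we induct. Sending each target monomial to the class of any of its preimage monomials
is then an `R`-linear map `L` with `L ∘ ψ` the quotient map, which puts `ker ψ` inside the ideal.
-/

open MvPolynomial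

namespace SquareSubstitution

variable {I J : Type*}

/-- `ψ` sends the variable `s` to the product of the variables in `substVars s`. -/
def substVars : I ⊕ J × J → Multiset (I ⊕ J)
  | .inl i => {.inl i}
  | .inr (j, k) => {.inr j, .inr k}

def expand (M : Multiset (I ⊕ J × J)) : Multiset (I ⊕ J) := M.bind substVars

@[simp]
lemma expand_cons_inl (i : I) (M : Multiset (I ⊕ J × J)) :
    expand (.inl i ::ₘ M) = .inl i ::ₘ expand M := by
  simp [expand, substVars]

@[simp]
lemma expand_cons_inr (j k : J) (M : Multiset (I ⊕ J × J)) :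
    expand (.inr (j, k) ::ₘ M) = .inr j ::ₘ .inr k ::ₘ expand M := by
  simp [expand, substVars, Multiset.insert_eq_cons]

lemma expand_ne_zero {M : Multiset (I ⊕ J × J)} (hM : M ≠ 0) : expand M ≠ 0 := by
  obtain ⟨s, hs⟩ := Multiset.exists_mem_of_ne_zero hM
  obtain ⟨M, rfl⟩ := Multiset.exists_cons_of_mem hs
  rcases s with i | ⟨j, k⟩ <;> simp

lemma mem_of_inl_mem_expand {i : I} {M : Multiset (I ⊕ J × J)} (h : .inl i ∈ expand M) :
    .inl i ∈ M := by
  obtain ⟨s, hs, hi⟩ := Multiset.mem_bind.1 h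
  rcases s with i' | ⟨j, k⟩ <;> simp_all [substVars]

section CommMonoid

variable {A : Type*} [CommMonoid A] {w : I ⊕ J × J → A}
  (hsymm : ∀ j k : J, w (.inr (j, k)) = w (.inr (k, j)))
  (hminor : ∀ j k l m : J,
    w (.inr (j, k)) * w (.inr (l, m)) = w (.inr (j, l)) * w (.inr (k, m)))

include hsymm in
lemma exists_expand_eq_cons_cons_of_inr_mem {a : J} {M : Multiset (I ⊕ J × J)}
    (ha : .inr a ∈ expand M) :
    ∃ (b : J) (M₀ : Multiset (I ⊕ J × J)), expand M = .inr a ::ₘ .inr b ::ₘ expand M₀ ∧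
      (M.map w).prod = w (.inr (a, b)) * (M₀.map w).prod := by
  obtain ⟨s, hs, has⟩ := Multiset.mem_bind.1 ha
  obtain ⟨M₀, rfl⟩ := Multiset.exists_cons_of_mem hs
  rcases s with i | ⟨j, k⟩
  · simp [substVars] at has
  · simp only [substVars, Multiset.insert_eq_cons, Multiset.mem_cons, Multiset.mem_singleton,
      Sum.inr.injEq] at has
    rcases has with rfl | rfl
    · exact ⟨k, M₀, expand_cons_inr _ _ _, by simp⟩
    · exact ⟨j, M₀, by rw [expand_cons_inr, Multiset.cons_swap], by simp [hsymm]⟩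

include hsymm hminor in
lemma exists_expand_eq_of_expand_eq_cons_cons {a b : J} {M : Multiset (I ⊕ J × J)}
    {s : Multiset (I ⊕ J)} (h : expand M = .inr a ::ₘ .inr b ::ₘ s) :
    ∃ M₀ : Multiset (I ⊕ J × J), expand M₀ = s ∧
      (M.map w).prod = w (.inr (a, b)) * (M₀.map w).prod := by
  obtain ⟨c, M₁, hM, hw⟩ :=
    exists_expand_eq_cons_cons_of_inr_mem hsymm (h ▸ Multiset.mem_cons_self _ _)
  rw [hM, Multiset.cons_inj_right, Multiset.cons_eq_cons] at h
  rcases h with ⟨hcb, hs⟩ | ⟨hcb, t, hM₁, hs⟩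
  · obtain rfl : c = b := Sum.inr_injective hcb
    exact ⟨M₁, hs, hw⟩
  · obtain ⟨d, M₂, hM₂, hw₁⟩ :=
      exists_expand_eq_cons_cons_of_inr_mem hsymm (hM₁ ▸ Multiset.mem_cons_self _ _)
    rw [hM₂, Multiset.cons_inj_right] at hM₁
    refine ⟨.inr (c, d) ::ₘ M₂, by rw [expand_cons_inr, hM₁, hs], ?_⟩
    rw [hw, hw₁, Multiset.map_cons, Multiset.prod_cons, ← mul_assoc, hminor, mul_assoc]

include hsymm hminor in
theorem factorsThrough_prod_map_expand :
    Function.FactorsThrough (fun M : Multiset (I ⊕ J × J) => (M.map w).prod) expand := by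
  intro M
  induction M using Multiset.induction_on with
  | empty =>
    intro M' h
    obtain rfl : M' = 0 := by_contra fun hM' => expand_ne_zero hM' h.symm
    rfl
  | cons s M ih =>
    intro M' h
    rcases s with i | ⟨a, b⟩
    · rw [expand_cons_inl] at h
      obtain ⟨M'', rfl⟩ :=
        Multiset.exists_cons_of_mem (mem_of_inl_mem_expand (h ▸ Multiset.mem_cons_self _ _))
      rw [expand_cons_inl, Multiset.cons_inj_right] at h
      simp [ih h]
    · rw [expand_cons_inr] at h
      obtain ⟨M₀, hM₀, hw⟩ := exists_expand_eq_of_expand_eq_cons_cons hsymm hminor h.symm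
      simp [hw, ih hM₀.symm]

end CommMonoid

section Polynomial

variable {R : Type*} [CommRing R]

lemma prod_map_X_eq_monomial {σ : Type*} [DecidableEq σ] (u : Multiset σ) :
    (u.map X).prod = monomial (Multiset.toFinsupp u) (1 : R) := by
  induction u using Multiset.induction_on with
  | empty => simp
  | cons s u ih =>
    rw [Multiset.map_cons, Multiset.prod_cons, ih, ← Multiset.singleton_add,
      Multiset.toFinsupp_add, Multiset.toFinsupp_singleton, X, monomial_mul, one_mul]

variable {ψ : MvPolynomial (I ⊕ J × J) R →ₐ[R] MvPolynomial (I ⊕ J) R}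
  (hX : ∀ i : I, ψ (X (.inl i)) = X (.inl i))
  (hV : ∀ jk : J × J, ψ (X (.inr jk)) = X (.inr jk.1) * X (.inr jk.2))

include hX hV in
lemma map_prod_map_X (M : Multiset (I ⊕ J × J)) :
    ψ (M.map X).prod = ((expand M).map X).prod := by
  rw [map_multiset_prod, Multiset.map_map, expand, Multiset.map_bind, Multiset.prod_bind]
  congr 1
  refine Multiset.map_congr rfl fun s _ => ?_
  rcases s with i | ⟨j, k⟩ <;> simp [substVars, hX, hV, Multiset.insert_eq_cons]

include hX hV in
theorem ker_le_of_symm_mem_of_minor_mem (S : Ideal (MvPolynomial (I ⊕ J × J) R))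
    (hsymm : ∀ j k : J, (X (.inr (j, k)) - X (.inr (k, j)) : MvPolynomial (I ⊕ J × J) R) ∈ S)
    (hminor : ∀ j k l m : J, (X (.inr (j, k)) * X (.inr (l, m)) -
      X (.inr (j, l)) * X (.inr (k, m)) : MvPolynomial (I ⊕ J × J) R) ∈ S) :
    RingHom.ker ψ ≤ S := by
  classical
  let w (s : I ⊕ J × J) : MvPolynomial (I ⊕ J × J) R ⧸ S := Ideal.Quotient.mk S (X s)
  have hw : Function.FactorsThrough (fun M => (M.map w).prod) expand :=
    factorsThrough_prod_map_expand (fun j k => Ideal.Quotient.eq.2 (hsymm j k))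
      (fun j k l m => by simpa only [w, ← map_mul] using Ideal.Quotient.eq.2 (hminor j k l m))
  let L : MvPolynomial (I ⊕ J) R →ₗ[R] MvPolynomial (I ⊕ J × J) R ⧸ S :=
    (basisMonomials _ R).constr R fun u =>
      Function.extend expand (fun M => (M.map w).prod) 0 (Finsupp.toMultiset u)
  have hL_monomial (u : I ⊕ J →₀ ℕ) :
      L (monomial u 1) = Function.extend expand (fun M => (M.map w).prod) 0 u.toMultiset := by
    simpa only [coe_basisMonomials] using (basisMonomials _ R).constr_basis R _ u
  have hL : L ∘ₗ ψ.toLinearMap = (Ideal.Quotient.mkₐ R S).toLinearMap := by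
    refine (basisMonomials _ R).ext fun d => ?_
    simp only [coe_basisMonomials, LinearMap.comp_apply, AlgHom.toLinearMap_apply]
    rw [← Finsupp.toMultiset_toFinsupp d, ← prod_map_X_eq_monomial, map_prod_map_X hX hV,
      prod_map_X_eq_monomial, hL_monomial, Multiset.toFinsupp_toMultiset, hw.extend_apply,
      Ideal.Quotient.mkₐ_eq_mk, map_multiset_prod, Multiset.map_map]
    rfl
  intro p hp
  rw [← Ideal.Quotient.eq_zero_iff_mem, ← Ideal.Quotient.mkₐ_eq_mk R, ← AlgHom.toLinearMap_apply,
    ← hL, LinearMap.comp_apply, AlgHom.toLinearMap_apply, RingHom.mem_ker.1 hp, map_zero]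

include hV in
lemma symm_mem_ker (j k : J) :
    (X (.inr (j, k)) - X (.inr (k, j)) : MvPolynomial (I ⊕ J × J) R) ∈ RingHom.ker ψ := by
  rw [RingHom.mem_ker]
  simp only [map_sub, hV]
  ring

include hV in
lemma minor_mem_ker (j k l m : J) : (X (.inr (j, k)) * X (.inr (l, m)) -
    X (.inr (j, l)) * X (.inr (k, m)) : MvPolynomial (I ⊕ J × J) R) ∈ RingHom.ker ψ := by
  rw [RingHom.mem_ker]
  simp only [map_sub, map_mul, hV]
  ring

include hX hV in
theorem range_eq_adjoin :
    ψ.range = Algebra.adjoin R ((Set.range fun i : I => (X (.inl i) : MvPolynomial (I ⊕ J) R)) ∪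
      Set.range fun jk : J × J => X (.inr jk.1) * X (.inr jk.2)) := by
  have hψX : ψ ∘ X = Sum.elim (fun i => X (.inl i)) fun jk => X (.inr jk.1) * X (.inr jk.2) :=
    funext fun s => by rcases s with i | jk <;> simp [hX, hV]
  rw [← Algebra.map_top, ← adjoin_range_X, AlgHom.map_adjoin, ← Set.range_comp, hψX,
    Set.Sum.elim_range]

end Polynomial

end SquareSubstitution

open SquareSubstitution

theorem ker_of_square_substitution_general
    (R : Type*) [CommRing R]
    (I J : Type*)
    (ψ : MvPolynomial (I ⊕ J × J) R →ₐ[R] MvPolynomial (I ⊕ J) R)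
    (hX : ∀ i : I, ψ (X (Sum.inl i)) = X (Sum.inl i))
    (hV : ∀ jk : J × J, ψ (X (Sum.inr jk)) = X (Sum.inr jk.1) * X (Sum.inr jk.2)) :
    RingHom.ker ψ.toRingHom =
      Ideal.span
        ((Set.range fun jk : J × J =>
            (X (Sum.inr (jk.1, jk.2)) - X (Sum.inr (jk.2, jk.1)) :
              MvPolynomial (I ⊕ J × J) R)) ∪
         (Set.range fun jklm : (J × J) × J × J =>
            (X (Sum.inr (jklm.1.1, jklm.1.2)) * X (Sum.inr (jklm.2.1, jklm.2.2)) -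
             X (Sum.inr (jklm.1.1, jklm.2.1)) * X (Sum.inr (jklm.1.2, jklm.2.2)) :
              MvPolynomial (I ⊕ J × J) R))) ∧
    ψ.range =
      Algebra.adjoin R
        ((Set.range fun i : I => (X (Sum.inl i) : MvPolynomial (I ⊕ J) R)) ∪
         (Set.range fun jk : J × J =>
            (X (Sum.inr jk.1) * X (Sum.inr jk.2) : MvPolynomial (I ⊕ J) R))) := by
  refine ⟨le_antisymm ?_ ?_, range_eq_adjoin hX hV⟩
  · exact ker_le_of_symm_mem_of_minor_mem hX hV _
      (fun j k => Ideal.subset_span (.inl ⟨(j, k), rfl⟩))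
      (fun j k l m => Ideal.subset_span (.inr ⟨((j, k), l, m), rfl⟩))
  · rw [Ideal.span_le]
    rintro _ (⟨⟨j, k⟩, rfl⟩ | ⟨⟨⟨j, k⟩, l, m⟩, rfl⟩)
    exacts [symm_mem_ker hV j k, minor_mem_ker hV j k l m]

/-- Let `R` be a commutative ring in which `2` is invertible, with finite
index sets `I` and `J`.  Let `ψ` be the `R`-algebra homomorphism from
`R[Xᵢ (i ∈ I), V_{j,k} ((j,k) ∈ J×J)]` to `R[xᵢ (i ∈ I), yⱼ (j ∈ J)]` determined by
`ψ(Xᵢ) = xᵢ` and `ψ(V_{j,k}) = yⱼ·yₖ`.  Then the kernel of `ψ` is the ideal generated by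
the elements `V_{j,k} − V_{k,j}` together with `V_{j,k}·V_{l,m} − V_{j,l}·V_{k,m}`;
consequently (`ψ` having the asserted range) the quotient of `R[Xᵢ, V_{j,k}]` by this ideal
is isomorphic, via `ψ`, to the subalgebra of `R[xᵢ, yⱼ]` generated by the `xᵢ` and the
products `yⱼ·yₖ`. -/
theorem ker_of_square_substitution
    (R : Type*) [CommRing R] [Invertible (2 : R)]
    (I J : Type*) [Finite I] [Finite J]
    (ψ : MvPolynomial (I ⊕ J × J) R →ₐ[R] MvPolynomial (I ⊕ J) R)
    (hX : ∀ i : I, ψ (X (Sum.inl i)) = X (Sum.inl i))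
    (hV : ∀ jk : J × J, ψ (X (Sum.inr jk)) = X (Sum.inr jk.1) * X (Sum.inr jk.2)) :
    RingHom.ker ψ.toRingHom =
      Ideal.span
        ((Set.range fun jk : J × J =>
            (X (Sum.inr (jk.1, jk.2)) - X (Sum.inr (jk.2, jk.1)) :
              MvPolynomial (I ⊕ J × J) R)) ∪
         (Set.range fun jklm : (J × J) × J × J =>
            (X (Sum.inr (jklm.1.1, jklm.1.2)) * X (Sum.inr (jklm.2.1, jklm.2.2)) -
             X (Sum.inr (jklm.1.1, jklm.2.1)) * X (Sum.inr (jklm.1.2, jklm.2.2)) :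
              MvPolynomial (I ⊕ J × J) R))) ∧
    ψ.range =
      Algebra.adjoin R
        ((Set.range fun i : I => (X (Sum.inl i) : MvPolynomial (I ⊕ J) R)) ∪
         (Set.range fun jk : J × J =>
            (X (Sum.inr jk.1) * X (Sum.inr jk.2) : MvPolynomial (I ⊕ J) R))) :=
  ker_of_square_substitution_general R I J ψ hX hV
end

section
/- Let A be a commutative ring, θ : A → A a ring homomorphism with θ ∘ θ = id, A₀ ⊆ A a subring with θ(A₀) ⊆ A₀, and δ ∈ A an element with θ(δ) = −δ. Assume that every element of A can be written in the form a + δ·b with a, b ∈ A₀. Let K ⊆ A be the subring generated by the set {x + θ(x) : x ∈ A₀} ∪ {δ·(x − θ(x)) : x ∈ A₀}. Then K is contained in the fixed subring Fix(θ) = {z ∈ A : θ(z) = z}, and 2z ∈ K for every z ∈ Fix(θ); that is, 2·Fix(θ) ⊆ K ⊆ Fix(θ). -/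
/-- Let `A` be a commutative ring, `θ : A → A` a ring homomorphism with
`θ ∘ θ = id`, `A₀ ⊆ A` a subring with `θ(A₀) ⊆ A₀`, and `δ ∈ A` with `θ(δ) = −δ`.  Assume
every element of `A` has the form `a + δ·b` with `a, b ∈ A₀`.  Let `K ⊆ A` be the subring
generated by `{x + θ(x) : x ∈ A₀} ∪ {δ·(x − θ(x)) : x ∈ A₀}`.  Then `K ⊆ Fix(θ)` and
`2z ∈ K` for every `z ∈ Fix(θ)`; that is, `2·Fix(θ) ⊆ K ⊆ Fix(θ)`. -/
theorem subring_between_twice_fixed_and_fixed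
    (A : Type*) [CommRing A]
    (θ : A →+* A) (hθ : θ.comp θ = RingHom.id A)
    (A₀ : Subring A) (hA₀ : ∀ x ∈ A₀, θ x ∈ A₀)
    (δ : A) (hδ : θ δ = -δ)
    (hgen : ∀ a : A, ∃ x ∈ A₀, ∃ y ∈ A₀, a = x + δ * y) :
    (∀ z ∈ Subring.closure
        ((fun x : A => x + θ x) '' (A₀ : Set A) ∪
         (fun x : A => δ * (x - θ x)) '' (A₀ : Set A)), θ z = z) ∧
    (∀ z : A, θ z = z →
      2 * z ∈ Subring.closure
        ((fun x : A => x + θ x) '' (A₀ : Set A) ∪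
         (fun x : A => δ * (x - θ x)) '' (A₀ : Set A))) := by
  have hθθ : ∀ a : A, θ (θ a) = a := fun a =>
    congrFun (congrArg DFunLike.coe hθ) a
  constructor
  · intro z hz
    have : z ∈ RingHom.eqLocus θ (RingHom.id A) := by
      refine Subring.closure_le.mpr ?_ hz
      rintro w (⟨x, hx, rfl⟩ | ⟨x, hx, rfl⟩)
      · show θ (x + θ x) = x + θ x
        rw [map_add, hθθ]; ring
      · show θ (δ * (x - θ x)) = δ * (x - θ x)
        rw [map_mul, map_sub, hθθ, hδ]; ring
    exact this
  · intro z hzfix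
    obtain ⟨x, hx, y, hy, rfl⟩ := hgen z
    have key : 2 * (x + δ * y) = (x + θ x) + δ * (y - θ y) := by
      have : θ (x + δ * y) = x + δ * y := hzfix
      rw [map_add, map_mul, hδ] at this
      linear_combination -this
    rw [key]
    exact Subring.add_mem _
      (Subring.subset_closure (Or.inl ⟨x, hx, rfl⟩))
      (Subring.subset_closure (Or.inr ⟨y, hy, rfl⟩))
end
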